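/- arXiv:1207.5125 — 2 statements merged into one kernel-verified Lean document; each statement's English description precedes it below -/
import Mathlib

section
/- (Case 1 time-shift estimate, from the proof of Theorem 6.2.) For every h with 0 < h ≤ Δt, the time-shifted piecewise constant function satisfies ∫_h^T ‖v(t−h) − v(t)‖² dt ≤ h · Σ_{j=1}^{N−1} ‖v^{j+1} − v^j‖². -/
/-!
A point `t ∈ (h, NΔt]` lies in some cell `((j-1)Δt, jΔt]`. Since `h ≤ Δt`, the shifted point
`t - h` is either in the same cell, where `v` does not change, or in the previous one; the latter
happens only for `t ∈ ((j-1)Δt, (j-1)Δt + h]`, a set of length `h`, on which the integrand is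
`‖v^j - v^{j-1}‖²`. Hence the integrand is dominated by a sum of step functions of total integral
`h · Σ ‖v^{j+1} - v^j‖²`.
-/

open MeasureTheory

lemma exists_mem_Icc_mem_Ioc_mul {N : ℕ} {Δt t : ℝ} (hΔt : 0 < Δt)
    (ht : t ∈ Set.Ioc 0 (N * Δt)) :
    ∃ j ∈ Finset.Icc 1 N, t ∈ Set.Ioc (((j : ℝ) - 1) * Δt) (j * Δt) := by
  have hpos : 0 < t / Δt := div_pos ht.1 hΔt
  refine ⟨⌈t / Δt⌉₊, Finset.mem_Icc.2 ⟨Nat.ceil_pos.2 hpos,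
    Nat.ceil_le.2 ((div_le_iff₀ hΔt).2 ht.2)⟩, ?_, ?_⟩
  · rw [← lt_div_iff₀ hΔt]
    linarith [Nat.ceil_lt_add_one (R := ℝ) hpos.le]
  · rw [← div_le_iff₀ hΔt]
    exact Nat.le_ceil _

lemma integrable_indicator_Ioc_const (a b c : ℝ) :
    Integrable ((Set.Ioc a b).indicator fun _ => c) :=
  (integrableOn_const measure_Ioc_lt_top.ne).integrable_indicator measurableSet_Ioc

lemma integrable_sum_indicator_Ioc {ι : Type*} (s : Finset ι) (a c : ι → ℝ) (h : ℝ) :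
    Integrable fun t => ∑ i ∈ s, (Set.Ioc (a i) (a i + h)).indicator (fun _ => c i) t :=
  integrable_finsetSum _ fun _ _ => integrable_indicator_Ioc_const _ _ _

lemma integral_sum_indicator_Ioc {ι : Type*} (s : Finset ι) (a c : ι → ℝ) {h : ℝ} (hh : 0 ≤ h) :
    ∫ t, ∑ i ∈ s, (Set.Ioc (a i) (a i + h)).indicator (fun _ => c i) t = h * ∑ i ∈ s, c i := by
  rw [integral_finsetSum _ fun _ _ => integrable_indicator_Ioc_const _ _ _, Finset.mul_sum]
  refine Finset.sum_congr rfl fun i _ => ?_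
  rw [integral_indicator_const _ measurableSet_Ioc, Real.volume_real_Ioc, add_sub_cancel_left,
    max_eq_left hh, smul_eq_mul]

section PiecewiseConstant

variable {E : Type*} {N : ℕ} {Δt h : ℝ} {vs : ℕ → E} {v : ℝ → E}

lemma shift_eq_or_mem_jump
    (hv : ∀ j ∈ Finset.Icc 1 N, ∀ t ∈ Set.Ioc (((j : ℝ) - 1) * Δt) ((j : ℝ) * Δt), v t = vs j)
    (hh : 0 < h) (hhΔt : h ≤ Δt) {t : ℝ} (ht : t ∈ Set.Ioc h (N * Δt)) :
    v (t - h) = v t ∨ ∃ j ∈ Finset.Icc 1 (N - 1),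
      t ∈ Set.Ioc (j * Δt) (j * Δt + h) ∧ v (t - h) = vs j ∧ v t = vs (j + 1) := by
  obtain ⟨j, hj, htj⟩ :=
    exists_mem_Icc_mem_Ioc_mul (hh.trans_le hhΔt) ⟨hh.trans ht.1, ht.2⟩
  have hvt : v t = vs j := hv j hj t htj
  rw [Finset.mem_Icc] at hj
  by_cases hjump : t - h ≤ ((j : ℝ) - 1) * Δt
  · obtain ⟨i, rfl⟩ : ∃ i, j = i + 1 := ⟨j - 1, by omega⟩
    push_cast at htj hjump hvt
    simp only [add_sub_cancel_right] at htj hjump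
    obtain rfl | hi := Nat.eq_zero_or_pos i
    · simp only [CharP.cast_eq_zero, zero_mul] at hjump
      linarith [ht.1]
    refine Or.inr ⟨i, Finset.mem_Icc.2 ⟨hi, by omega⟩, ⟨htj.1, by linarith⟩, ?_, hvt⟩
    exact hv i (Finset.mem_Icc.2 ⟨hi, by omega⟩) (t - h) ⟨by linarith [htj.1], hjump⟩
  · left
    rw [hvt, hv j (Finset.mem_Icc.2 hj) (t - h) ⟨not_le.1 hjump, by linarith [htj.2]⟩]

variable [SeminormedAddCommGroup E]

lemma sq_norm_sub_shift_le_sum_indicator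
    (hv : ∀ j ∈ Finset.Icc 1 N, ∀ t ∈ Set.Ioc (((j : ℝ) - 1) * Δt) ((j : ℝ) * Δt), v t = vs j)
    (hh : 0 < h) (hhΔt : h ≤ Δt) {t : ℝ} (ht : t ∈ Set.Ioc h (N * Δt)) :
    ‖v (t - h) - v t‖ ^ 2 ≤ ∑ j ∈ Finset.Icc 1 (N - 1),
      (Set.Ioc (j * Δt) (j * Δt + h)).indicator (fun _ => ‖vs (j + 1) - vs j‖ ^ 2) t := by
  have hnonneg : ∀ j ∈ Finset.Icc 1 (N - 1),
      0 ≤ (Set.Ioc (j * Δt) (j * Δt + h)).indicator (fun _ => ‖vs (j + 1) - vs j‖ ^ 2) t :=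
    fun _ _ => Set.indicator_nonneg (fun _ _ => sq_nonneg _) t
  rcases shift_eq_or_mem_jump hv hh hhΔt ht with hsame | ⟨j, hj, htj, hleft, hright⟩
  · rw [hsame, sub_self, norm_zero, zero_pow two_ne_zero]
    exact Finset.sum_nonneg hnonneg
  · refine le_of_eq_of_le ?_ (Finset.single_le_sum hnonneg hj)
    rw [Set.indicator_of_mem htj, hleft, hright, norm_sub_rev]

theorem integral_sq_norm_sub_shift_le
    (hv : ∀ j ∈ Finset.Icc 1 N, ∀ t ∈ Set.Ioc (((j : ℝ) - 1) * Δt) ((j : ℝ) * Δt), v t = vs j)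
    (hh : 0 < h) (hhΔt : h ≤ Δt) :
    ∫ t in Set.Ioc h (N * Δt), ‖v (t - h) - v t‖ ^ 2
      ≤ h * ∑ j ∈ Finset.Icc 1 (N - 1), ‖vs (j + 1) - vs j‖ ^ 2 := by
  set jumps : ℝ → ℝ := fun t => ∑ j ∈ Finset.Icc 1 (N - 1),
    (Set.Ioc (j * Δt) (j * Δt + h)).indicator (fun _ => ‖vs (j + 1) - vs j‖ ^ 2) t
  have hjumps : Integrable jumps := integrable_sum_indicator_Ioc _ _ _ h
  -- `v` need not be measurable: the first step only needs the dominating function integrable.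
  calc ∫ t in Set.Ioc h (N * Δt), ‖v (t - h) - v t‖ ^ 2
      ≤ ∫ t in Set.Ioc h (N * Δt), jumps t :=
        integral_mono_of_nonneg (ae_of_all _ fun _ => sq_nonneg _) hjumps.integrableOn
          (ae_restrict_of_forall_mem measurableSet_Ioc fun _ ht =>
            sq_norm_sub_shift_le_sum_indicator hv hh hhΔt ht)
    _ ≤ ∫ t, jumps t := setIntegral_le_integral hjumps <| ae_of_all _ fun t =>
        Finset.sum_nonneg fun _ _ => Set.indicator_nonneg (fun _ _ => sq_nonneg _) t
    _ = h * ∑ j ∈ Finset.Icc 1 (N - 1), ‖vs (j + 1) - vs j‖ ^ 2 :=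
        integral_sum_indicator_Ioc _ _ _ hh.le

end PiecewiseConstant

theorem stmt_0_general {E : Type*} [NormedAddCommGroup E]
    (T : ℝ) (N : ℕ)
    (Δt : ℝ) (hΔt : Δt = T / N)
    (vs : ℕ → E) (v : ℝ → E)
    (hv : ∀ j ∈ Finset.Icc 1 N, ∀ t ∈ Set.Ioc (((j : ℝ) - 1) * Δt) ((j : ℝ) * Δt),
      v t = vs j)
    (h : ℝ) (hh : 0 < h) (hhΔt : h ≤ Δt) :
    ∫ t in Set.Ioc h T, ‖v (t - h) - v t‖ ^ 2
      ≤ h * ∑ j ∈ Finset.Icc 1 (N - 1), ‖vs (j + 1) - vs j‖ ^ 2 := by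
  -- `T / 0 = 0` would force `Δt = 0 < h`
  have hN : (N : ℝ) ≠ 0 := by
    rintro hN0
    rw [hN0, div_zero] at hΔt
    linarith
  have hT : T = N * Δt := by rw [hΔt, mul_div_cancel₀ _ hN]
  rw [hT]
  exact integral_sq_norm_sub_shift_le hv hh hhΔt

/-- Case 1 time-shift estimate (proof of Theorem 6.2): for `0 < h ≤ Δt`,
`∫_h^T ‖v(t-h) - v(t)‖² dt ≤ h · Σ_{j=1}^{N-1} ‖v^{j+1} - v^j‖²`,
where `v` is the piecewise constant function with `v(t) = v^j` on `((j-1)Δt, jΔt]`. -/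
theorem stmt_0 {E : Type*} [NormedAddCommGroup E]
    (T : ℝ) (hT : 0 < T) (N : ℕ) (hN : 0 < N)
    (Δt : ℝ) (hΔt : Δt = T / N)
    (vs : ℕ → E) (v : ℝ → E)
    (hv : ∀ j ∈ Finset.Icc 1 N, ∀ t ∈ Set.Ioc (((j : ℝ) - 1) * Δt) ((j : ℝ) * Δt),
      v t = vs j)
    (h : ℝ) (hh : 0 < h) (hhΔt : h ≤ Δt) :
    ∫ t in Set.Ioc h T, ‖v (t - h) - v t‖ ^ 2
      ≤ h * ∑ j ∈ Finset.Icc 1 (N - 1), ‖vs (j + 1) - vs j‖ ^ 2 :=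
  stmt_0_general T N Δt hΔt vs v hv h hh hhΔt
end

section
/- (L² distance between the piecewise constant and the piecewise linear interpolants of the same time samples.) Let additionally v⁰ ∈ E, extend the piecewise constant function by the same rule v(t) = v^j on ((j−1)Δt, jΔt], and let ṽ : [0,T] → E be the continuous piecewise linear function with ṽ(jΔt) = v^j for j = 0,…,N that is affine on each interval [(j−1)Δt, jΔt]. Then ∫_0^T ‖v(t) − ṽ(t)‖² dt ≤ (Δt/3) · Σ_{j=1}^{N} ‖v^j − v^{j−1}‖². -/
open MeasureTheory Filter

/-- L² distance between the piecewise constant interpolant `v` and the continuous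
piecewise linear interpolant `ṽ` of the same time samples:
`∫_0^T ‖v(t) - ṽ(t)‖² dt ≤ (Δt/3) Σ_{j=1}^N ‖v^j - v^{j-1}‖²`. -/
theorem stmt_4 {E : Type*} [NormedAddCommGroup E] [NormedSpace ℝ E]
    (T : ℝ) (hT : 0 < T) (N : ℕ) (hN : 0 < N)
    (Δt : ℝ) (hΔt : Δt = T / N)
    (vs : ℕ → E) (v : ℝ → E) (vlin : ℝ → E)
    (hv : ∀ j ∈ Finset.Icc 1 N, ∀ t ∈ Set.Ioc (((j : ℝ) - 1) * Δt) ((j : ℝ) * Δt),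
      v t = vs j)
    (hvlin : ∀ j ∈ Finset.Icc 1 N, ∀ t ∈ Set.Icc (((j : ℝ) - 1) * Δt) ((j : ℝ) * Δt),
      vlin t = vs (j - 1) + ((t - ((j : ℝ) - 1) * Δt) / Δt) • (vs j - vs (j - 1))) :
    ∫ t in Set.Ioc (0 : ℝ) T, ‖v t - vlin t‖ ^ 2
      ≤ (Δt / 3) * ∑ j ∈ Finset.Icc 1 N, ‖vs j - vs (j - 1)‖ ^ 2 := by
  have hD : 0 < Δt := by
    rw [hΔt]; positivity
  set f : ℝ → ℝ := fun t => ‖v t - vlin t‖ ^ 2 with hf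
  -- pointwise equality on each interval
  have key : ∀ j ∈ Finset.Icc 1 N, ∀ t ∈ Set.Ioc (((j : ℝ) - 1) * Δt) ((j : ℝ) * Δt),
      f t = (((j : ℝ) * Δt - t) / Δt) ^ 2 * ‖vs j - vs (j - 1)‖ ^ 2 := by
    intro j hj t ht
    have h1 := hv j hj t ht
    have h2 := hvlin j hj t (Set.Ioc_subset_Icc_self ht)
    have : v t - vlin t = ((((j : ℝ)) * Δt - t) / Δt) • (vs j - vs (j - 1)) := by
      rw [h1, h2]
      have hj1 : vs j = vs (j-1) + (vs j - vs (j-1)) := by abel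
      rw [show (((j : ℝ) * Δt - t) / Δt) = 1 - (t - ((j : ℝ) - 1) * Δt) / Δt by
        field_simp; ring]
      rw [sub_smul, one_smul]
      abel
    rw [hf]; simp only [this, norm_smul, Real.norm_eq_abs, mul_pow, sq_abs]
  -- per-interval integral value
  have per : ∀ j ∈ Finset.Icc 1 N,
      ∫ t in Set.Ioc (((j : ℝ) - 1) * Δt) ((j : ℝ) * Δt), f t
        = (Δt / 3) * ‖vs j - vs (j - 1)‖ ^ 2 := by
    intro j hj
    have hcong : ∫ t in Set.Ioc (((j : ℝ) - 1) * Δt) ((j : ℝ) * Δt), f t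
        = ∫ t in Set.Ioc (((j : ℝ) - 1) * Δt) ((j : ℝ) * Δt),
            ((((j : ℝ)) * Δt - t) / Δt) ^ 2 * ‖vs j - vs (j - 1)‖ ^ 2 := by
      apply setIntegral_congr_fun measurableSet_Ioc
      intro t ht
      exact key j hj t ht
    rw [hcong]
    have hle : ((j : ℝ) - 1) * Δt ≤ (j : ℝ) * Δt := by nlinarith
    rw [← intervalIntegral.integral_of_le hle]
    have : ∫ t in (((j : ℝ) - 1) * Δt)..((j : ℝ) * Δt),
        ((((j : ℝ)) * Δt - t) / Δt) ^ 2 * ‖vs j - vs (j - 1)‖ ^ 2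
        = (∫ t in (((j : ℝ) - 1) * Δt)..((j : ℝ) * Δt), (((j : ℝ)) * Δt - t) ^ 2)
          * (‖vs j - vs (j - 1)‖ ^ 2 / Δt ^ 2) := by
      rw [← intervalIntegral.integral_mul_const]
      congr 1; ext t; field_simp; try ring
    rw [this, intervalIntegral.integral_comp_sub_left (fun x => x ^ 2) ((j : ℝ) * Δt)]
    rw [show (j : ℝ) * Δt - (j : ℝ) * Δt = 0 by ring,
      show (j : ℝ) * Δt - ((j : ℝ) - 1) * Δt = Δt by ring]
    rw [integral_pow]
    field_simp
    ring
  -- interval integrability of f on each piece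
  have hint : ∀ k < N, IntervalIntegrable f volume
      (((k : ℕ) : ℝ) * Δt) (((k + 1 : ℕ) : ℝ) * Δt) := by
    intro k hk
    have hjmem : (k + 1) ∈ Finset.Icc 1 N := by
      simp [Nat.succ_le_of_lt hk]
    have hcast : ((k + 1 : ℕ) : ℝ) - 1 = (k : ℝ) := by push_cast; ring
    have hle : ((k : ℕ) : ℝ) * Δt ≤ ((k + 1 : ℕ) : ℝ) * Δt := by
      push_cast; nlinarith
    rw [intervalIntegrable_iff_integrableOn_Ioc_of_le hle]
    have hg : IntegrableOn
        (fun t => (((((k + 1 : ℕ) : ℝ)) * Δt - t) / Δt) ^ 2 * ‖vs (k + 1) - vs (k + 1 - 1)‖ ^ 2)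
        (Set.Ioc (((k : ℕ) : ℝ) * Δt) (((k + 1 : ℕ) : ℝ) * Δt)) volume := by
      exact Continuous.integrableOn_Ioc
        ((((continuous_const.sub continuous_id).div_const Δt).pow 2).mul continuous_const)
    apply hg.congr_fun _ measurableSet_Ioc
    intro t ht
    exact (key (k + 1) hjmem t (by rw [hcast]; exact ht)).symm
  -- assemble
  have hsum := intervalIntegral.sum_integral_adjacent_intervals
    (f := f) (μ := volume) (a := fun i => ((i : ℕ) : ℝ) * Δt) (n := N) hint
  have hT' : ((N : ℕ) : ℝ) * Δt = T := by
    rw [hΔt]; field_simp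
  have h0 : (((0 : ℕ)) : ℝ) * Δt = 0 := by simp
  rw [← intervalIntegral.integral_of_le hT.le]
  have : ∫ t in (0 : ℝ)..T, f t
      = ∑ k ∈ Finset.range N, ∫ t in (((k : ℕ) : ℝ) * Δt)..(((k + 1 : ℕ) : ℝ) * Δt), f t := by
    rw [hsum]
    norm_num [hT']
  rw [this]
  have heq : ∀ k ∈ Finset.range N,
      ∫ t in (((k : ℕ) : ℝ) * Δt)..(((k + 1 : ℕ) : ℝ) * Δt), f t
        = (Δt / 3) * ‖vs (k + 1) - vs (k + 1 - 1)‖ ^ 2 := by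
    intro k hk
    have hk' : k < N := Finset.mem_range.mp hk
    have hjmem : (k + 1) ∈ Finset.Icc 1 N := by simp [Nat.succ_le_of_lt hk']
    have hcast : ((k + 1 : ℕ) : ℝ) - 1 = (k : ℝ) := by push_cast; ring
    have hle : ((k : ℕ) : ℝ) * Δt ≤ ((k + 1 : ℕ) : ℝ) * Δt := by push_cast; nlinarith
    rw [intervalIntegral.integral_of_le hle]
    have := per (k + 1) hjmem
    rw [hcast] at this
    exact this
  rw [Finset.sum_congr rfl heq]
  apply le_of_eq
  rw [← Finset.Ico_add_one_right_eq_Icc, Finset.sum_Ico_eq_sum_range, Finset.mul_sum]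
  simp only [Nat.add_sub_cancel, Nat.add_sub_cancel_left]
  exact Finset.sum_congr rfl fun x _ => by rw [add_comm 1 x]
end
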